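/- Let R be a commutative ring with derivation D : R → R, and define τ on polynomials by τf = Σᵢ (∂f/∂Xᵢ)·Yᵢ + f^D, and ∇a = (a, Da) for tuples a. Then for every f and every k ≥ 1, evaluating the k-fold iterate τᵏf at the iterated tuple ∇ᵏa equals Dᵏ(f(a)). -/
import Mathlib


open MvPolynomial

/-- Applying `D` to each coefficient of a multivariate polynomial. -/
noncomputable def coeffMap {R S : Type*} [CommRing R] [CommRing S] {σ : Type*}
    (D : R → S) (f : MvPolynomial σ R) : MvPolynomial σ S :=
  f.support.sum fun m => monomial m (D (coeff m f))

/-- The prolongation operator `τ f = ∑ i, (∂f/∂Xᵢ) * Yᵢ + f^D`, doubling the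
variable set (old variables are `Sum.inl`, new ones `Sum.inr`). -/
noncomputable def tauG {R : Type*} [CommRing R] {σ : Type*} [Fintype σ] (D : R → R)
    (f : MvPolynomial σ R) : MvPolynomial (σ ⊕ σ) R :=
  (∑ i, rename Sum.inl (pderiv i f) * X (Sum.inr i)) + rename Sum.inl (coeffMap D f)

/-- Variable set at level `k`: `n` variables doubled `k` times. -/
def Vars (n : ℕ) : ℕ → Type
  | 0 => Fin n
  | k + 1 => Vars n k ⊕ Vars n k

instance varsFintype (n : ℕ) : ∀ k, Fintype (Vars n k)
  | 0 => inferInstanceAs (Fintype (Fin n))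
  | k + 1 =>
      letI := varsFintype n k
      inferInstanceAs (Fintype (Vars n k ⊕ Vars n k))

/-- `k`-fold iterate of `τ`. -/
noncomputable def iterTau {R : Type*} [CommRing R] {n : ℕ} (D : R → R) :
    (k : ℕ) → MvPolynomial (Vars n 0) R → MvPolynomial (Vars n k) R
  | 0, f => f
  | k + 1, f => tauG D (iterTau D k f)

/-- `k`-fold iterate of `∇ a = (a, D a)`. -/
def iterNabla {R : Type*} (D : R → R) {n : ℕ} :
    (k : ℕ) → (Fin n → R) → Vars n k → R
  | 0, a => a
  | k + 1, a => Sum.elim (iterNabla D k a) (fun v => D (iterNabla D k a v))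

section Aux

variable {R : Type*} [CommRing R] {σ : Type*} {D : R → R}

lemma auxD0 (hadd : ∀ x y : R, D (x + y) = D x + D y) : D 0 = 0 := by
  have h := hadd 0 0
  rw [add_zero] at h
  exact (left_eq_add.mp h)

lemma auxD1 (hmul : ∀ x y : R, D (x * y) = D x * y + x * D y) : D 1 = 0 := by
  have h := hmul 1 1
  simp only [mul_one, one_mul] at h
  exact left_eq_add.mp h

lemma coeff_coeffMap (hadd : ∀ x y : R, D (x + y) = D x + D y)
    (f : MvPolynomial σ R) (m : σ →₀ ℕ) :
    coeff m (coeffMap D f) = D (coeff m f) := by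
  classical
  unfold coeffMap
  rw [coeff_sum]
  simp only [coeff_monomial]
  rw [Finset.sum_ite_eq' f.support m (fun m' => D (coeff m' f))]
  split_ifs with h
  · rfl
  · rw [notMem_support_iff.mp h, auxD0 hadd]

lemma coeffMap_add (hadd : ∀ x y : R, D (x + y) = D x + D y) (p q : MvPolynomial σ R) :
    coeffMap D (p + q) = coeffMap D p + coeffMap D q := by
  ext m
  simp [coeff_coeffMap hadd, hadd]

lemma coeffMap_mul (hadd : ∀ x y : R, D (x + y) = D x + D y)
    (hmul : ∀ x y : R, D (x * y) = D x * y + x * D y) (p q : MvPolynomial σ R) :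
    coeffMap D (p * q) = coeffMap D p * q + p * coeffMap D q := by
  have hDsum : ∀ (s : Finset ((σ →₀ ℕ) × (σ →₀ ℕ))) (g : (σ →₀ ℕ) × (σ →₀ ℕ) → R),
      D (∑ x ∈ s, g x) = ∑ x ∈ s, D (g x) := fun s g => map_sum (AddMonoidHom.mk' D hadd) g s
  classical
  ext m
  simp only [coeff_coeffMap hadd, coeff_add]
  rw [MvPolynomial.coeff_mul, MvPolynomial.coeff_mul, MvPolynomial.coeff_mul,
    hDsum, ← Finset.sum_add_distrib]
  refine Finset.sum_congr rfl fun x _ => ?_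
  simp [hmul, coeff_coeffMap hadd]

lemma coeffMap_C (hadd : ∀ x y : R, D (x + y) = D x + D y) (a : R) :
    coeffMap D (C a : MvPolynomial σ R) = C (D a) := by
  classical
  ext m
  simp only [coeff_coeffMap hadd, coeff_C]
  split_ifs
  · rfl
  · exact auxD0 hadd

lemma tauG_add (hadd : ∀ x y : R, D (x + y) = D x + D y) [Fintype σ] (p q : MvPolynomial σ R) :
    tauG D (p + q) = tauG D p + tauG D q := by
  simp only [tauG, map_add, add_mul, Finset.sum_add_distrib, coeffMap_add hadd]
  ring

lemma tauG_mul_X (hadd : ∀ x y : R, D (x + y) = D x + D y)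
    (hmul : ∀ x y : R, D (x * y) = D x * y + x * D y) [Fintype σ]
    (p : MvPolynomial σ R) (i : σ) :
    tauG D (p * X i) = tauG D p * X (Sum.inl i) + rename Sum.inl p * X (Sum.inr i) := by
  classical
  have hcm : coeffMap D (p * X i) = coeffMap D p * X i := by
    rw [coeffMap_mul hadd hmul]
    have : coeffMap D (X i : MvPolynomial σ R) = 0 := by
      ext m
      simp only [coeff_coeffMap hadd, coeff_zero, coeff_X']
      split_ifs
      · exact auxD1 hmul
      · exact auxD0 hadd
    rw [this, mul_zero, add_zero]
  simp only [tauG, hcm, pderiv_mul, map_add, map_mul, add_mul, Finset.sum_add_distrib]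
  have h1 : ∑ j, rename (Sum.inl : σ → σ ⊕ σ) p * rename Sum.inl (pderiv j (X i)) * X (Sum.inr j)
      = rename Sum.inl p * X (Sum.inr i) := by
    rw [Finset.sum_eq_single i]
    · simp
    · intro j _ hj
      simp [pderiv_X_of_ne (Ne.symm hj)]
    · intro h; exact absurd (Finset.mem_univ i) h
  rw [h1]
  have h2 : (∑ j, rename (Sum.inl : σ → σ ⊕ σ) (pderiv j p) * rename Sum.inl (X i) * X (Sum.inr j))
      = (∑ j, rename (Sum.inl : σ → σ ⊕ σ) (pderiv j p) * X (Sum.inr j)) * X (Sum.inl i) := by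
    rw [Finset.sum_mul]
    refine Finset.sum_congr rfl fun j _ => ?_
    rw [rename_X]; ring
  rw [h2]
  simp only [rename_X]
  ring

lemma tauG_C (hadd : ∀ x y : R, D (x + y) = D x + D y) [Fintype σ] (a : R) :
    tauG D (C a : MvPolynomial σ R) = C (D a) := by
  simp only [tauG, coeffMap_C hadd, pderiv_C, map_zero, zero_mul, Finset.sum_const_zero,
    zero_add, rename_C]

lemma eval_tauG (hadd : ∀ x y : R, D (x + y) = D x + D y)
    (hmul : ∀ x y : R, D (x * y) = D x * y + x * D y) [Fintype σ]
    (b : σ → R) (f : MvPolynomial σ R) :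
    eval (Sum.elim b fun i => D (b i)) (tauG D f) = D (eval b f) := by
  induction f using MvPolynomial.induction_on with
  | C a => rw [tauG_C hadd]; simp
  | add p q hp hq =>
      rw [tauG_add hadd, map_add, hp, hq, map_add, hadd]
  | mul_X p i hp =>
      rw [tauG_mul_X hadd hmul, map_add, map_mul, map_mul, hp, eval_rename]
      simp only [eval_X, Sum.elim_inl, Sum.elim_inr, map_mul]
      rw [hmul]
      rfl

end Aux

/-- `τᵏ f` evaluated at `∇ᵏ a` equals `Dᵏ (f(a))`. -/
theorem stmt10 {R : Type*} [CommRing R] {n : ℕ}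
    (D : R → R)
    (hadd : ∀ x y : R, D (x + y) = D x + D y)
    (hmul : ∀ x y : R, D (x * y) = D x * y + x * D y)
    (f : MvPolynomial (Vars n 0) R) (a : Fin n → R) (k : ℕ) (hk : 1 ≤ k) :
    eval (iterNabla D k a) (iterTau D k f) = D^[k] (eval a f) := by
  clear hk
  induction k with
  | zero => rfl
  | succ k ih =>
      show eval (Sum.elim (iterNabla D k a) fun v => D (iterNabla D k a v))
          (tauG D (iterTau D k f)) = _
      rw [eval_tauG hadd hmul, ih, Function.iterate_succ_apply']
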